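/- arXiv:2204.11670 — 4 statements merged into one kernel-verified Lean document; each statement's English description precedes it below -/
import Mathlib

section
/- Swap lemma: Let ρ : σ →* τ be an abstract execution of a round-based register protocol with visibility range v whose first-write order is p · R · R' · s, where p, s are sequences of registers, and R, R' are registers with round(R) > round(R') + v. Then there exists an abstract execution ρ' : σ →* τ (with the same initial and final configurations) whose first-write order is p · R' · R · s. -/
open scoped Classical

/-- Actions of a round-based register protocol: round increment, read of value `x`
from register `α` of round `k - i`, and write of value `x` to register `α` of the
current round. -/
inductive Act (dim : ℕ) (D : Type) where
  | incr : Act dim D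
  | read (i : ℕ) (α : Fin dim) (x : D) : Act dim D
  | write (α : Fin dim) (x : D) : Act dim D

/-- A round-based register protocol. -/
structure Protocol (Q D : Type) (dim : ℕ) where
  q0 : Q
  d0 : D
  v : ℕ
  T : Set (Q × Act dim D × Q)
  read_le : ∀ q i α x q', (q, Act.read i α x, q') ∈ T → i ≤ v
  write_ne : ∀ q α x q', (q, Act.write α x, q') ∈ T → x ≠ d0

/-- A move: a transition together with the round on which it is performed. -/
abbrev Move (Q D : Type) (dim : ℕ) := (Q × Act dim D × Q) × ℕ

/-- A concrete configuration: a finitely supported multiset of locations and a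
valuation of all registers. -/
structure Conc (Q D : Type) (dim : ℕ) where
  loc : (Q × ℕ) →₀ ℕ
  reg : ℕ → Fin dim → D

variable {Q D : Type} {dim : ℕ}

/-- Value read from register `α` of round `k - i` (registers of negative rounds
hold the initial value). -/
def regVal (P : Protocol Q D dim) (γ : Conc Q D dim) (k i : ℕ) (α : Fin dim) : D :=
  if i ≤ k then γ.reg (k - i) α else P.d0

/-- Updating register `α` of round `k` to value `x`. -/
def updReg (r : ℕ → Fin dim → D) (k : ℕ) (α : Fin dim) (x : D) : ℕ → Fin dim → D :=
  fun k' α' => if k' = k ∧ α' = α then x else r k' α'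

/-- Concrete step relation of a round-based register protocol. -/
inductive ConcStep [DecidableEq Q] (P : Protocol Q D dim) :
    Conc Q D dim → Move Q D dim → Conc Q D dim → Prop where
  | incr {q q' : Q} {k : ℕ} {γ γ' : Conc Q D dim} :
      (q, Act.incr, q') ∈ P.T → 0 < γ.loc (q, k) →
      γ'.loc = γ.loc - Finsupp.single (q, k) 1 + Finsupp.single (q', k + 1) 1 →
      γ'.reg = γ.reg →
      ConcStep P γ ((q, Act.incr, q'), k) γ'
  | read {q q' : Q} {k i : ℕ} {α : Fin dim} {x : D} {γ γ' : Conc Q D dim} :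
      (q, Act.read i α x, q') ∈ P.T → 0 < γ.loc (q, k) →
      regVal P γ k i α = x →
      γ'.loc = γ.loc - Finsupp.single (q, k) 1 + Finsupp.single (q', k) 1 →
      γ'.reg = γ.reg →
      ConcStep P γ ((q, Act.read i α x, q'), k) γ'
  | write {q q' : Q} {k : ℕ} {α : Fin dim} {x : D} {γ γ' : Conc Q D dim} :
      (q, Act.write α x, q') ∈ P.T → 0 < γ.loc (q, k) →
      γ'.loc = γ.loc - Finsupp.single (q, k) 1 + Finsupp.single (q', k) 1 →
      γ'.reg = updReg γ.reg k α x →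
      ConcStep P γ ((q, Act.write α x, q'), k) γ'

/-- Concrete reachability. -/
def ConcReach [DecidableEq Q] (P : Protocol Q D dim) : Conc Q D dim → Conc Q D dim → Prop :=
  Relation.ReflTransGen (fun γ γ' => ∃ m, ConcStep P γ m γ')

/-- Initial concrete configuration with `n` processes. -/
noncomputable def Conc.init [DecidableEq Q] (P : Protocol Q D dim) (n : ℕ) : Conc Q D dim :=
  ⟨Finsupp.single (P.q0, 0) n, fun _ _ => P.d0⟩

/-- Number of processes of a concrete configuration. -/
def Conc.size (γ : Conc Q D dim) : ℕ := γ.loc.sum fun _ n => n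

/-- Support of the location multiset of a concrete configuration. -/
def Conc.supp (γ : Conc Q D dim) : Set (Q × ℕ) := {l | 0 < γ.loc l}

/-- The set of non-blank registers of a concrete configuration. -/
def Conc.nonBlank (P : Protocol Q D dim) (γ : Conc Q D dim) : Set (ℕ × Fin dim) :=
  {r | γ.reg r.1 r.2 ≠ P.d0}

/-- An abstract configuration: a set of locations and a set of written registers. -/
structure Abs (Q : Type) (dim : ℕ) where
  S : Set (Q × ℕ)
  W : Set (ℕ × Fin dim)

/-- Abstract step relation. -/
inductive AbsStep (P : Protocol Q D dim) :
    Abs Q dim → Move Q D dim → Abs Q dim → Prop where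
  | incr {σ : Abs Q dim} {q q' : Q} {k : ℕ} :
      (q, Act.incr, q') ∈ P.T → (q, k) ∈ σ.S →
      AbsStep P σ ((q, Act.incr, q'), k) ⟨σ.S ∪ {(q', k + 1)}, σ.W⟩
  | readBlank {σ : Abs Q dim} {q q' : Q} {k i : ℕ} {α : Fin dim} :
      (q, Act.read i α P.d0, q') ∈ P.T → (q, k) ∈ σ.S →
      (i ≤ k → (k - i, α) ∉ σ.W) →
      AbsStep P σ ((q, Act.read i α P.d0, q'), k) ⟨σ.S ∪ {(q', k)}, σ.W⟩
  | readVal {σ : Abs Q dim} {q q' q1 q2 : Q} {k i : ℕ} {α : Fin dim} {x : D} :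
      x ≠ P.d0 → (q, Act.read i α x, q') ∈ P.T → (q, k) ∈ σ.S →
      i ≤ k → (k - i, α) ∈ σ.W →
      (q1, Act.write α x, q2) ∈ P.T → (q1, k - i) ∈ σ.S → (q2, k - i) ∈ σ.S →
      AbsStep P σ ((q, Act.read i α x, q'), k) ⟨σ.S ∪ {(q', k)}, σ.W⟩
  | write {σ : Abs Q dim} {q q' : Q} {k : ℕ} {α : Fin dim} {x : D} :
      (q, Act.write α x, q') ∈ P.T → (q, k) ∈ σ.S →
      AbsStep P σ ((q, Act.write α x, q'), k) ⟨σ.S ∪ {(q', k)}, σ.W ∪ {(k, α)}⟩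

/-- Abstract reachability. -/
def AbsReach (P : Protocol Q D dim) : Abs Q dim → Abs Q dim → Prop :=
  Relation.ReflTransGen (fun σ σ' => ∃ m, AbsStep P σ m σ')

/-- The initial abstract configuration. -/
def Abs.init (P : Protocol Q D dim) : Abs Q dim := ⟨{(P.q0, 0)}, ∅⟩

/-- Abstract execution along a list of moves. -/
inductive AbsRun (P : Protocol Q D dim) : Abs Q dim → List (Move Q D dim) → Abs Q dim → Prop
  | nil (σ : Abs Q dim) : AbsRun P σ [] σ
  | cons {σ σ' σ'' : Abs Q dim} {m : Move Q D dim} {ms : List (Move Q D dim)} :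
      AbsStep P σ m σ' → AbsRun P σ' ms σ'' → AbsRun P σ (m :: ms) σ''

/-- First-write order of a schedule, given a set of already written registers. -/
noncomputable def fwo (W : Set (ℕ × Fin dim)) : List (Move Q D dim) → List (ℕ × Fin dim)
  | [] => []
  | ((_, Act.write α _, _), k) :: ms =>
      if (k, α) ∈ W then fwo W ms else (k, α) :: fwo (W ∪ {(k, α)}) ms
  | _ :: ms => fwo W ms

/-- Projection of a sequence of registers onto those whose round lies in `[k - v, k]`. -/
def winproj (v k : ℕ) (F : List (ℕ × Fin dim)) : List (ℕ × Fin dim) :=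
  F.filter (fun r => decide (k - v ≤ r.1 ∧ r.1 ≤ k))

/-! An abstract move of round `k` only observes locations of rounds `≤ k` and registers of
rounds in `[k - v, k]`, and it only adds things at rounds `≥ k`. Let `m` be the move that first
writes `R` and `m'` the one that first writes `R'`. Scanning the moves between them, every move
of round `≤ round R' + v` is hoisted in front of the block of higher-round moves that starts
with `m` (it cannot observe anything the block adds, and it writes no new register), and the
others join the block. Finally `m'` itself is hoisted in front of the block: no move of the block
can observe the register `R'`, since `round R' < round R - v`. -/

namespace Move

def target : Move Q D dim → Q × ℕ
  | ((_, Act.incr, q'), k) => (q', k + 1)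
  | ((_, _, q'), k) => (q', k)

def writes : Move Q D dim → Set (ℕ × Fin dim)
  | ((_, Act.write α _, _), k) => {(k, α)}
  | _ => ∅

theorem round_le_target (m : Move Q D dim) : m.2 ≤ m.target.2 := by
  obtain ⟨⟨_, a, _⟩, _⟩ := m
  cases a <;> simp [target]

theorem round_of_mem_writes {m : Move Q D dim} {r : ℕ × Fin dim} (h : r ∈ m.writes) :
    r.1 = m.2 := by
  obtain ⟨⟨_, a, _⟩, _⟩ := m
  cases a <;> simp only [writes, Set.mem_singleton_iff, Set.mem_empty_iff_false] at h
  subst h; rfl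

theorem exists_writes_eq_of_not_subset {m : Move Q D dim} {W : Set (ℕ × Fin dim)}
    (h : ¬ m.writes ⊆ W) : ∃ r, m.writes = {r} ∧ r ∉ W := by
  obtain ⟨⟨_, a, _⟩, k⟩ := m
  cases a with
  | write α _ => exact ⟨(k, α), rfl, fun hr => h (Set.singleton_subset_iff.2 hr)⟩
  | _ => exact absurd (Set.empty_subset W) h

end Move

theorem fwo_cons_of_writes_subset {W : Set (ℕ × Fin dim)} {m : Move Q D dim}
    {l : List (Move Q D dim)} (h : m.writes ⊆ W) : fwo W (m :: l) = fwo W l := by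
  obtain ⟨⟨_, a, _⟩, k⟩ := m
  cases a with
  | write α _ => simp [fwo, Set.singleton_subset_iff.1 h]
  | _ => rfl

theorem fwo_cons_of_writes_eq {W : Set (ℕ × Fin dim)} {m : Move Q D dim}
    {l : List (Move Q D dim)} {r : ℕ × Fin dim} (hm : m.writes = {r}) (hr : r ∉ W) :
    fwo W (m :: l) = r :: fwo (W ∪ {r}) l := by
  obtain ⟨⟨_, a, _⟩, k⟩ := m
  cases a with
  | write α _ =>
    obtain rfl : (k, α) = r := Set.singleton_eq_singleton_iff.1 hm
    simp [fwo, hr]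
  | _ => exact absurd hm (Set.singleton_nonempty r).ne_empty.symm

theorem fwo_union_singleton_of_not_mem_writes {W : Set (ℕ × Fin dim)} {r : ℕ × Fin dim}
    {l : List (Move Q D dim)} (h : ∀ m ∈ l, r ∉ m.writes) : fwo (W ∪ {r}) l = fwo W l := by
  induction l generalizing W with
  | nil => rfl
  | cons m l ih =>
    have hl : ∀ m' ∈ l, r ∉ m'.writes := fun m' hm' => h m' (List.mem_cons_of_mem _ hm')
    by_cases hsub : m.writes ⊆ W
    · rw [fwo_cons_of_writes_subset (hsub.trans Set.subset_union_left),
        fwo_cons_of_writes_subset hsub, ih hl]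
    · obtain ⟨r', hm, hr'⟩ := Move.exists_writes_eq_of_not_subset hsub
      have hne : r' ≠ r := fun h' => h m List.mem_cons_self (by rw [hm, h']; rfl)
      rw [fwo_cons_of_writes_eq hm hr', fwo_cons_of_writes_eq hm (by simp [hr', hne]),
        Set.union_right_comm, ih hl]

def Abs.apply (σ : Abs Q dim) (m : Move Q D dim) : Abs Q dim :=
  ⟨σ.S ∪ {m.target}, σ.W ∪ m.writes⟩

theorem Abs.apply_comm (σ : Abs Q dim) (m₁ m₂ : Move Q D dim) :
    (σ.apply m₁).apply m₂ = (σ.apply m₂).apply m₁ := by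
  simp only [Abs.apply, Abs.mk.injEq]
  exact ⟨Set.union_right_comm .., Set.union_right_comm ..⟩

section Runs

variable {P : Protocol Q D dim}

theorem AbsStep.eq_apply {σ σ' : Abs Q dim} {m : Move Q D dim} (h : AbsStep P σ m σ') :
    σ' = σ.apply m := by
  cases h <;> simp [Abs.apply, Move.target, Move.writes]

theorem AbsStep.W_eq {σ σ' : Abs Q dim} {m : Move Q D dim} (h : AbsStep P σ m σ') :
    σ'.W = σ.W ∪ m.writes := by
  rw [h.eq_apply]; rfl

theorem AbsStep.of_window {σ σ' τ : Abs Q dim} {m : Move Q D dim} (h : AbsStep P σ m σ')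
    (hS : ∀ l ∈ σ.S, l.2 ≤ m.2 → l ∈ τ.S)
    (hW : ∀ r : ℕ × Fin dim, m.2 ≤ r.1 + P.v → r.1 ≤ m.2 → (r ∈ τ.W ↔ r ∈ σ.W)) :
    AbsStep P τ m (τ.apply m) := by
  suffices ∃ τ', AbsStep P τ m τ' by
    obtain ⟨τ', hτ'⟩ := this
    exact hτ'.eq_apply ▸ hτ'
  cases h with
  | incr ht hq => exact ⟨_, .incr ht (hS _ hq le_rfl)⟩
  | readBlank ht hq hblank =>
    have := P.read_le _ _ _ _ _ ht
    exact ⟨_, .readBlank ht (hS _ hq le_rfl) fun hik hr =>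
      hblank hik ((hW _ (by dsimp only; omega) (by dsimp only; omega)).1 hr)⟩
  | readVal hx ht hq hik hr ht' hq₁ hq₂ =>
    have := P.read_le _ _ _ _ _ ht
    exact ⟨_, .readVal hx ht (hS _ hq le_rfl) hik
      ((hW _ (by dsimp only; omega) (by dsimp only; omega)).2 hr) ht'
      (hS _ hq₁ (by dsimp only; omega)) (hS _ hq₂ (by dsimp only; omega))⟩
  | write ht hq => exact ⟨_, .write ht (hS _ hq le_rfl)⟩

theorem AbsStep.swap {σ σₘ σ' : Abs Q dim} {m₁ m₂ : Move Q D dim}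
    (h₁ : AbsStep P σ m₁ σₘ) (h₂ : AbsStep P σₘ m₂ σ') (hlt : m₂.2 < m₁.2)
    (hw : ∀ r ∈ m₂.writes, r ∈ σ.W ∨ r.1 + P.v < m₁.2) :
    AbsStep P σ m₂ (σ.apply m₂) ∧ AbsStep P (σ.apply m₂) m₁ σ' := by
  obtain rfl := h₁.eq_apply
  obtain rfl := h₂.eq_apply
  refine ⟨h₂.of_window ?_ ?_, Abs.apply_comm σ m₁ m₂ ▸ h₁.of_window ?_ ?_⟩
  · rintro l (hl | rfl) hle
    · exact hl
    · exact absurd (hlt.trans_le m₁.round_le_target) hle.not_gt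
  · intro r _ hr
    have : r ∉ m₁.writes := fun h => by have := Move.round_of_mem_writes h; omega
    simp only [Abs.apply, Set.mem_union, this, or_false]
  · exact fun l hl _ => Or.inl hl
  · intro r hr _
    refine ⟨fun h => ?_, Or.inl⟩
    rcases h with h | h
    · exact h
    · exact (hw r h).resolve_right (by omega)

theorem AbsRun.append {σ σ₁ τ : Abs Q dim} {l₁ l₂ : List (Move Q D dim)}
    (h₁ : AbsRun P σ l₁ σ₁) (h₂ : AbsRun P σ₁ l₂ τ) : AbsRun P σ (l₁ ++ l₂) τ := by
  induction h₁ with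
  | nil => exact h₂
  | cons h _ ih => exact .cons h (ih h₂)

theorem AbsRun.W_subset {σ τ : Abs Q dim} {l : List (Move Q D dim)} (h : AbsRun P σ l τ) :
    σ.W ⊆ τ.W := by
  induction h with
  | nil => exact le_rfl
  | cons h _ ih => exact h.W_eq ▸ Set.subset_union_left |>.trans ih

theorem AbsRun.mem_W {σ τ : Abs Q dim} {l : List (Move Q D dim)} (h : AbsRun P σ l τ)
    {r : ℕ × Fin dim} (hr : r ∈ τ.W) : r ∈ σ.W ∨ ∃ m ∈ l, r ∈ m.writes := by
  induction h with
  | nil => exact .inl hr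
  | cons h _ ih =>
    rcases ih hr with hr | ⟨m, hm, hrm⟩
    · rcases h.W_eq ▸ hr with hr | hr
      · exact .inl hr
      · exact .inr ⟨_, List.mem_cons_self, hr⟩
    · exact .inr ⟨m, List.mem_cons_of_mem _ hm, hrm⟩

theorem AbsRun.hoist {σ σ₁ σ₂ : Abs Q dim} {l : List (Move Q D dim)} {m : Move Q D dim}
    (hl : AbsRun P σ l σ₁) (hm : AbsStep P σ₁ m σ₂) (hlt : ∀ m₁ ∈ l, m.2 < m₁.2)
    (hw : ∀ m₁ ∈ l, ∀ r ∈ m.writes, r ∈ σ.W ∨ r.1 + P.v < m₁.2) :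
    AbsRun P σ (m :: l) σ₂ := by
  induction hl with
  | nil => exact .cons hm (.nil _)
  | cons h₁ _ ih =>
    have hmoved := ih hm (fun m₁ hm₁ => hlt m₁ (List.mem_cons_of_mem _ hm₁))
      (fun m₁ hm₁ r hr => (hw m₁ (List.mem_cons_of_mem _ hm₁) r hr).imp_left
        fun h => h₁.W_eq ▸ Or.inl h)
    cases hmoved with
    | cons hstep hrun =>
      obtain ⟨hm', h₁'⟩ := h₁.swap hstep (hlt _ List.mem_cons_self)
        (hw _ List.mem_cons_self)
      exact .cons hm' (.cons h₁' hrun)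

theorem AbsRun.fwo_append {σ σ₁ : Abs Q dim}
    {l₁ : List (Move Q D dim)} (h : AbsRun P σ l₁ σ₁) (l₂ : List (Move Q D dim)) :
    fwo σ.W (l₁ ++ l₂) = fwo σ.W l₁ ++ fwo σ₁.W l₂ := by
  induction h with
  | nil => rfl
  | @cons σ σ' _ m _ hm _ ih =>
    rw [List.cons_append]
    by_cases hsub : m.writes ⊆ σ.W
    · have hW : σ'.W = σ.W := by rw [hm.W_eq, Set.union_eq_left.2 hsub]
      rw [fwo_cons_of_writes_subset hsub, fwo_cons_of_writes_subset hsub, ← hW, ih]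
    · obtain ⟨r, hwr, hr⟩ := Move.exists_writes_eq_of_not_subset hsub
      have hW : σ'.W = σ.W ∪ {r} := by rw [hm.W_eq, hwr]
      rw [fwo_cons_of_writes_eq hwr hr, fwo_cons_of_writes_eq hwr hr, ← hW, ih,
        List.cons_append]

theorem AbsRun.exists_hoist_first_write {σ₁ τ : Abs Q dim}
    {rest : List (Move Q D dim)} {r : ℕ × Fin dim} {s : List (ℕ × Fin dim)}
    (hrest : AbsRun P σ₁ rest τ) (hfwo : fwo σ₁.W rest = r :: s)
    {σ : Abs Q dim} {pre : List (Move Q D dim)} (hpre : AbsRun P σ pre σ₁)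
    (hround : ∀ m ∈ pre, r.1 + P.v < m.2) :
    ∃ ms, AbsRun P σ ms τ ∧ fwo σ.W ms = r :: (fwo σ.W pre ++ s) := by
  induction hrest generalizing σ pre with
  | nil => simp [fwo] at hfwo
  | @cons σ₁ σ₂ τ m rest hm hrest ih =>
    by_cases hsub : m.writes ⊆ σ₁.W
    · have hW : σ₂.W = σ₁.W := by rw [hm.W_eq, Set.union_eq_left.2 hsub]
      rw [fwo_cons_of_writes_subset hsub, ← hW] at hfwo
      by_cases hhigh : r.1 + P.v < m.2
      · obtain ⟨ms, hrun, hms⟩ := ih hfwo (hpre.append (.cons hm (.nil _))) fun m' hm' => by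
          rcases List.mem_append.1 hm' with hm' | hm'
          · exact hround m' hm'
          · rwa [List.mem_singleton.1 hm']
        refine ⟨ms, hrun, ?_⟩
        rw [hms, hpre.fwo_append, fwo_cons_of_writes_subset hsub, fwo.eq_1,
          List.append_nil]
      · have hsub' : m.writes ⊆ σ.W := fun x hx =>
          (hpre.mem_W (hsub hx)).resolve_right fun ⟨m', hm', hxm'⟩ => by
            have := hround m' hm'
            have := Move.round_of_mem_writes hx
            have := Move.round_of_mem_writes hxm'
            omega
        cases hpre.hoist hm (fun m' hm' => by have := hround m' hm'; omega)
          (fun _ _ x hx => .inl (hsub' hx)) with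
        | @cons _ σₐ _ _ _ hstep hpre' =>
          have hWₐ : σₐ.W = σ.W := by rw [hstep.W_eq, Set.union_eq_left.2 hsub']
          obtain ⟨ms, hrun, hms⟩ := ih hfwo hpre' hround
          rw [hWₐ] at hms
          exact ⟨m :: ms, .cons hstep hrun, by rw [fwo_cons_of_writes_subset hsub', hms]⟩
    · obtain ⟨r', hwr, hr'⟩ := Move.exists_writes_eq_of_not_subset hsub
      rw [fwo_cons_of_writes_eq hwr hr'] at hfwo
      obtain ⟨rfl, rfl⟩ := List.cons.inj hfwo
      have hmr : m.2 = r'.1 := (Move.round_of_mem_writes (hwr ▸ rfl)).symm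
      have hhoist := hpre.hoist hm (fun m' hm' => by have := hround m' hm'; omega)
        (fun m' hm' x hx => .inr (by rw [hwr.subset hx]; exact hround m' hm'))
      refine ⟨m :: pre ++ rest, hhoist.append hrest, ?_⟩
      have hW : σ₂.W = σ₁.W ∪ {r'} := by rw [hm.W_eq, hwr]
      rw [hhoist.fwo_append, fwo_cons_of_writes_eq hwr fun h => hr' (hpre.W_subset h),
        fwo_union_singleton_of_not_mem_writes fun m' hm' hx => by
          have := hround m' hm'
          have := Move.round_of_mem_writes hx
          omega,
        hW, List.cons_append]

end Runs

/-- Swap lemma (Lemma A.3). -/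
theorem swap_lemma {Q D : Type} {dim : ℕ}
    (P : Protocol Q D dim) (σ τ : Abs Q dim) (ms : List (Move Q D dim))
    (hrun : AbsRun P σ ms τ)
    (p s : List (ℕ × Fin dim)) (R R' : ℕ × Fin dim)
    (hround : R'.1 + P.v < R.1)
    (hfwo : fwo σ.W ms = p ++ R :: R' :: s) :
    ∃ ms' : List (Move Q D dim),
      AbsRun P σ ms' τ ∧ fwo σ.W ms' = p ++ R' :: R :: s := by
  induction hrun generalizing p with
  | nil => simp [fwo] at hfwo
  | @cons σ σ' τ m ms hm hrest ih =>
    by_cases hsub : m.writes ⊆ σ.W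
    · have hW : σ'.W = σ.W := by rw [hm.W_eq, Set.union_eq_left.2 hsub]
      rw [fwo_cons_of_writes_subset hsub, ← hW] at hfwo
      obtain ⟨ms', hrun', hms'⟩ := ih p hfwo
      exact ⟨m :: ms', .cons hm hrun', by rw [fwo_cons_of_writes_subset hsub, ← hW, hms']⟩
    · obtain ⟨r, hwr, hr⟩ := Move.exists_writes_eq_of_not_subset hsub
      have hW : σ'.W = σ.W ∪ {r} := by rw [hm.W_eq, hwr]
      rw [fwo_cons_of_writes_eq hwr hr, ← hW] at hfwo
      cases p with
      | nil =>
        rw [List.nil_append] at hfwo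
        obtain ⟨rfl, htail⟩ := List.cons.inj hfwo
        have hmR : m.2 = r.1 := (Move.round_of_mem_writes (hwr ▸ rfl)).symm
        obtain ⟨ms', hrun', hms'⟩ := hrest.exists_hoist_first_write htail
          (.cons hm (.nil _)) (by simpa [hmR] using hround)
        exact ⟨ms', hrun', by rw [hms', fwo_cons_of_writes_eq hwr hr]; rfl⟩
      | cons r₀ p =>
        rw [List.cons_append] at hfwo
        obtain ⟨rfl, htail⟩ := List.cons.inj hfwo
        obtain ⟨ms', hrun', hms'⟩ := ih p htail
        exact ⟨m :: ms', .cons hm hrun', by rw [fwo_cons_of_writes_eq hwr hr, ← hW, hms']; rfl⟩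
end

section
/- Confluence of swaps for window-equivalent sequences: Let v ∈ ℕ and let F and G be finite sequences of registers such that for all k ∈ ℕ, the subsequences of F and of G consisting of registers with rounds in [k−v, k] are equal. Then there exists a single swap-proof sequence H that can be obtained both by iteratively applying swaps to F and by iteratively applying swaps to G. -/
/-!
Every swap removes an inversion, so swapping terminates in a swap-proof sequence, and swaps do
not change the window projections. It then suffices that a swap-proof sequence is determined by
its window projections. In a swap-proof sequence consecutive rounds drop by at most `v`; so if
`x` heads `F` and `y` heads `G` with `round x ≤ round y`, the first register of `G` in the window
`[round x, round x + v]` is either `y` or has round above `round x`, as the descent from `y` cannot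
skip the window. The window projection of `F` starts with `x`, hence `x = y`, and one recurses
on the tails.
-/

variable {R : Type}

/-- Number of inversions of a sequence of registers: pairs of positions `i < j`
with `round F_i > round F_j + v`. -/
def inversions (round : R → ℕ) (v : ℕ) : List R → ℕ
  | [] => 0
  | x :: xs => xs.countP (fun y => decide (round y + v < round x)) + inversions round v xs

/-- `F'` is obtained from `F` by one swap: two adjacent registers more than `v`
rounds apart are exchanged, the one with earliest round being put first. -/
def IsSwap (round : R → ℕ) (v : ℕ) (F F' : List R) : Prop :=
  ∃ p s : List R, ∃ x y : R,
    round y + v < round x ∧ F = p ++ x :: y :: s ∧ F' = p ++ y :: x :: s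

/-- A sequence is swap-proof when no swap is applicable. -/
def SwapProof (round : R → ℕ) (v : ℕ) (F : List R) : Prop :=
  ¬ ∃ F' : List R, IsSwap round v F F'

/-- Projection of a sequence of registers onto the window of rounds `[k - v, k]`. -/
def windowProj (round : R → ℕ) (v k : ℕ) (F : List R) : List R :=
  F.filter (fun x => decide (k - v ≤ round x ∧ round x ≤ k))

section

variable (round : R → ℕ) (v : ℕ)

lemma inversions_swap {x y : R} (h : round y + v < round x) (p s : List R) :
    inversions round v (p ++ y :: x :: s) + 1 = inversions round v (p ++ x :: y :: s) := by
  induction p with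
  | nil =>
    have hyx : ¬ round x + v < round y := by omega
    simp only [List.nil_append, inversions, List.countP_cons, h, hyx, decide_true,
      decide_false, if_true, if_false, Bool.false_eq_true]
    omega
  | cons a p ih =>
    simp only [List.cons_append, inversions, List.countP_append, List.countP_cons]
    omega

lemma IsSwap.inversions_lt {F F' : List R} (h : IsSwap round v F F') :
    inversions round v F' < inversions round v F := by
  obtain ⟨p, s, x, y, hxy, rfl, rfl⟩ := h
  have := inversions_swap round v hxy p s
  omega

lemma exists_reflTransGen_swapProof (F : List R) :
    ∃ H, Relation.ReflTransGen (IsSwap round v) F H ∧ SwapProof round v H := by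
  induction hn : inversions round v F using Nat.strong_induction_on generalizing F with
  | _ n ih =>
    by_cases hF : SwapProof round v F
    · exact ⟨F, .refl, hF⟩
    · obtain ⟨F', hF'⟩ := not_not.mp hF
      obtain ⟨H, hF'H, hH⟩ := ih _ (hn ▸ hF'.inversions_lt round v) F' rfl
      exact ⟨H, .head hF' hF'H, hH⟩

lemma swapProof_iff_isChain (F : List R) :
    SwapProof round v F ↔ F.IsChain (fun x y => round x ≤ round y + v) := by
  simp only [SwapProof, IsSwap, List.isChain_iff_forall_rel_of_append_cons_cons]
  constructor
  · intro hF x y p s hp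
    by_contra! hxy
    exact hF ⟨_, p, s, x, y, hxy, hp, rfl⟩
  · rintro hF ⟨_, p, s, x, y, hxy, hp, -⟩
    exact absurd (hF hp) (by omega)

lemma windowProj_cons_of_mem {k : ℕ} {x : R} (l : List R)
    (hlo : k - v ≤ round x) (hhi : round x ≤ k) :
    windowProj round v k (x :: l) = x :: windowProj round v k l := by
  have hlo' : k ≤ round x + v := by omega
  simp [windowProj, hlo', hhi]

lemma windowProj_cons_of_lt {k : ℕ} {x : R} (l : List R) (hk : k < round x) :
    windowProj round v k (x :: l) = windowProj round v k l := by
  simp [windowProj, Nat.not_le.mpr hk]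

lemma windowProj_eq_of_isSwap {F F' : List R} (h : IsSwap round v F F') (k : ℕ) :
    windowProj round v k F = windowProj round v k F' := by
  obtain ⟨p, s, x, y, hxy, rfl, rfl⟩ := h
  simp only [windowProj, List.filter_append, List.filter_cons]
  -- `x` and `y` are more than `v` rounds apart, so at most one of them lies in the window.
  split_ifs with hx hy hy <;> first | rfl | (simp only [decide_eq_true_eq] at hx hy; omega)

lemma windowProj_eq_of_reflTransGen {F F' : List R}
    (h : Relation.ReflTransGen (IsSwap round v) F F') (k : ℕ) :
    windowProj round v k F = windowProj round v k F' := by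
  induction h with
  | refl => rfl
  | tail _ hstep ih => exact ih.trans (windowProj_eq_of_isSwap round v hstep k)

lemma mem_windowProj_self {x : R} {l : List R} (hx : x ∈ l) :
    x ∈ windowProj round v (round x) l := by
  simp [windowProj, hx]

lemma windowProj_eq_of_cons_eq_cons {x : R} {F G : List R} {k : ℕ}
    (h : windowProj round v k (x :: F) = windowProj round v k (x :: G)) :
    windowProj round v k F = windowProj round v k G := by
  simp only [windowProj, List.filter_cons] at h
  split_ifs at h
  exacts [(List.cons.inj h).2, h]

/-- Rounds in a swap-proof sequence drop by at most `v` per step, so on the way down from above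
`k` the sequence cannot jump over the window `[k - v, k]`. -/
lemma lt_add_of_mem_head?_windowProj {y u : R} {l : List R}
    (hl : (y :: l).IsChain (fun x y => round x ≤ round y + v)) {k : ℕ} (hk : k < round y)
    (hu : u ∈ (windowProj round v k (y :: l)).head?) : k < round u + v := by
  induction l generalizing y with
  | nil =>
    rw [windowProj_cons_of_lt round v _ hk] at hu
    simp [windowProj] at hu
  | cons z l ih =>
    rw [List.isChain_cons_cons] at hl
    rw [windowProj_cons_of_lt round v _ hk] at hu
    by_cases hz : k < round z
    · exact ih hl.2 hz hu
    · rw [windowProj_cons_of_mem round v _ (by omega) (by omega)] at hu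
      simp only [List.head?_cons, Option.mem_def, Option.some.injEq] at hu
      subst hu
      omega

lemma head_eq_of_windowProj_eq {x y : R} {F G : List R}
    (hG : (y :: G).IsChain (fun x y => round x ≤ round y + v)) (hxy : round x ≤ round y)
    (hproj : ∀ k, windowProj round v k (x :: F) = windowProj round v k (y :: G)) : y = x := by
  have hx : windowProj round v (round x + v) (y :: G) =
      x :: windowProj round v (round x + v) F := by
    rw [← hproj, windowProj_cons_of_mem round v _ (by omega) (by omega)]
  by_cases hy : round y ≤ round x + v
  · rw [windowProj_cons_of_mem round v _ (by omega) hy] at hx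
    exact (List.cons.inj hx).1
  · have := lt_add_of_mem_head?_windowProj round v hG (k := round x + v) (u := x) (by omega)
      (by simp [hx])
    omega

lemma eq_nil_of_forall_windowProj_eq_nil {l : List R}
    (h : ∀ k, windowProj round v k l = []) : l = [] := by
  refine List.eq_nil_iff_forall_not_mem.mpr fun x hx => ?_
  simpa [h] using mem_windowProj_self round v hx

lemma eq_of_isChain_of_windowProj_eq {F G : List R}
    (hF : F.IsChain (fun x y => round x ≤ round y + v))
    (hG : G.IsChain (fun x y => round x ≤ round y + v))
    (hproj : ∀ k, windowProj round v k F = windowProj round v k G) : F = G := by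
  induction F generalizing G with
  | nil => exact (eq_nil_of_forall_windowProj_eq_nil round v fun k => (hproj k).symm).symm
  | cons x F ih =>
    cases G with
    | nil => exact eq_nil_of_forall_windowProj_eq_nil round v hproj
    | cons y G =>
      obtain rfl : y = x := by
        rcases le_total (round x) (round y) with h | h
        · exact head_eq_of_windowProj_eq round v hG h hproj
        · exact (head_eq_of_windowProj_eq round v hF h fun k => (hproj k).symm).symm
      exact congrArg (List.cons _)
        (ih hF.tail hG.tail fun k => windowProj_eq_of_cons_eq_cons round v (hproj k))

end

/-- Confluence of swaps for window-equivalent sequences (Lemma A.4). -/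
theorem swaps_confluence (round : R → ℕ) (v : ℕ) (F G : List R)
    (hwin : ∀ k : ℕ, windowProj round v k F = windowProj round v k G) :
    ∃ H : List R,
      Relation.ReflTransGen (IsSwap round v) F H ∧
      Relation.ReflTransGen (IsSwap round v) G H ∧
      SwapProof round v H := by
  obtain ⟨HF, hFHF, hHF⟩ := exists_reflTransGen_swapProof round v F
  obtain ⟨HG, hGHG, hHG⟩ := exists_reflTransGen_swapProof round v G
  have hproj : ∀ k, windowProj round v k HF = windowProj round v k HG := fun k => by
    rw [← windowProj_eq_of_reflTransGen round v hFHF,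
      ← windowProj_eq_of_reflTransGen round v hGHG, hwin]
  obtain rfl : HF = HG := eq_of_isChain_of_windowProj_eq round v
    ((swapProof_iff_isChain round v HF).mp hHF) ((swapProof_iff_isChain round v HG).mp hHG) hproj
  exact ⟨HF, hFHF, hGHG, hHF⟩
end

section
/- Swaps preserve window projections: Let v ∈ ℕ and let F' be obtained from a finite sequence F of registers by one swap (exchanging adjacent registers R, R' with round(R) > round(R') + v to put R' first). Then for every k ∈ ℕ, the subsequence of F consisting of registers with rounds in [k−v, k] equals the corresponding subsequence of F'. -/
variable {R : Type}

/-- Swaps preserve window projections. -/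
theorem swap_preserves_window_projections (round : R → ℕ) (v : ℕ) (F F' : List R)
    (h : IsSwap round v F F') (k : ℕ) :
    windowProj round v k F = windowProj round v k F' := by
  obtain ⟨p, s, x, y, hxy, hF, hF'⟩ := h
  subst hF hF'
  simp only [windowProj, List.filter_append, List.filter_cons]
  have : ¬ (k ≤ round x + v ∧ round x ≤ k) ∨ ¬ (k ≤ round y + v ∧ round y ≤ k) := by
    by_contra hc
    push_neg at hc
    obtain ⟨⟨_, hx⟩, ⟨hy, _⟩⟩ := hc
    omega
  rcases this with hx | hy
  · simp [hx]
  · simp [hy]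
end

section
/- Reordering executions when v = 0: In a round-based register protocol with visibility range v = 0, every abstract execution σ_init →* σ can be reordered into an abstract execution σ_init →* σ' with S(σ) ⊆ S(σ'), W(σ) = W(σ'), and whose schedule is sorted by round: all moves on round 0 occur first, then all moves on round 1, and so on. -/
open scoped Classical

variable {Q D : Type} {dim : ℕ}

/-! With `v = 0` a move on round `k` is enabled by, and changes, only data of round `k`, except
that an increment also adds a location on round `k + 1`, which can only enable further moves.
So a move on a higher round followed directly by a move on a lower round can be swapped without
changing the configuration reached, and insertion sort by round turns any abstract execution
into a sorted one with the same end configuration. -/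

theorem Protocol.read_offset_eq_zero {P : Protocol Q D dim} (hv : P.v = 0) {q q' : Q} {i : ℕ}
    {α : Fin dim} {x : D} (ht : (q, Act.read i α x, q') ∈ P.T) : i = 0 :=
  Nat.le_zero.mp (hv ▸ P.read_le _ _ _ _ _ ht)

namespace Abs

def afterMove (σ : Abs Q dim) : Move Q D dim → Abs Q dim
  | ((_, Act.incr, q'), k) => ⟨σ.S ∪ {(q', k + 1)}, σ.W⟩
  | ((_, Act.read _ _ _, q'), k) => ⟨σ.S ∪ {(q', k)}, σ.W⟩
  | ((_, Act.write α _, q'), k) => ⟨σ.S ∪ {(q', k)}, σ.W ∪ {(k, α)}⟩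

variable (σ : Abs Q dim) (m m' : Move Q D dim)

theorem S_subset_afterMove_S : σ.S ⊆ (σ.afterMove m).S := by
  rcases m with ⟨⟨_, a, _⟩, _⟩
  cases a <;> exact Set.subset_union_left

theorem mem_afterMove_S_of_lt {q : Q} {k : ℕ} (hk : k < m.2) :
    (q, k) ∈ (σ.afterMove m).S ↔ (q, k) ∈ σ.S := by
  rcases m with ⟨⟨_, a, _⟩, _⟩
  cases a <;> simp [afterMove] <;> omega

theorem mem_afterMove_W_of_ne {k : ℕ} {α : Fin dim} (hk : k ≠ m.2) :
    (k, α) ∈ (σ.afterMove m).W ↔ (k, α) ∈ σ.W := by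
  rcases m with ⟨⟨_, a, _⟩, _⟩
  cases a <;> simp [afterMove, hk]

theorem afterMove_comm : (σ.afterMove m).afterMove m' = (σ.afterMove m').afterMove m := by
  rcases m with ⟨⟨_, a, _⟩, _⟩
  rcases m' with ⟨⟨_, a', _⟩, _⟩
  cases a <;> cases a' <;> simp only [afterMove, Set.union_right_comm]

end Abs

namespace AbsStep

variable {P : Protocol Q D dim} {σ σ₁ σ₂ τ : Abs Q dim} {m m₁ m₂ : Move Q D dim}

theorem eq_afterMove (h : AbsStep P σ m σ₁) : σ₁ = σ.afterMove m := by
  cases h <;> rfl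

theorem afterMove_of_agree_on_round (hv : P.v = 0) (h : AbsStep P σ m σ₁)
    (hS : ∀ q, (q, m.2) ∈ σ.S → (q, m.2) ∈ τ.S)
    (hW : ∀ α, (m.2, α) ∈ τ.W ↔ (m.2, α) ∈ σ.W) :
    AbsStep P τ m (τ.afterMove m) := by
  cases h with
  | incr ht hq => exact incr ht (hS _ hq)
  | readBlank ht hq hblank =>
    obtain rfl := P.read_offset_eq_zero hv ht
    exact readBlank ht (hS _ hq) fun hk hw => hblank hk ((hW _).1 hw)
  | readVal hx ht hq hk hw ht' h₁ h₂ =>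
    obtain rfl := P.read_offset_eq_zero hv ht
    exact readVal hx ht (hS _ hq) hk ((hW _).2 hw) ht' (hS _ h₁) (hS _ h₂)
  | write ht hq => exact write ht (hS _ hq)

theorem swap_of_round_lt (hv : P.v = 0) (hlt : m₂.2 < m₁.2)
    (h₁ : AbsStep P σ m₁ σ₁) (h₂ : AbsStep P σ₁ m₂ σ₂) :
    ∃ σ', AbsStep P σ m₂ σ' ∧ AbsStep P σ' m₁ σ₂ := by
  obtain rfl := h₁.eq_afterMove
  obtain rfl := h₂.eq_afterMove
  refine ⟨σ.afterMove m₂, ?_, ?_⟩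
  · exact h₂.afterMove_of_agree_on_round hv (fun _ => (σ.mem_afterMove_S_of_lt m₁ hlt).1)
      fun _ => (σ.mem_afterMove_W_of_ne m₁ hlt.ne).symm
  · rw [Abs.afterMove_comm]
    exact h₁.afterMove_of_agree_on_round hv (fun _ hq => σ.S_subset_afterMove_S m₂ hq)
      fun _ => σ.mem_afterMove_W_of_ne m₂ hlt.ne'

end AbsStep

namespace AbsRun

variable {P : Protocol Q D dim} {σ' : Abs Q dim}

theorem orderedInsert (hv : P.v = 0) {m : Move Q D dim} :
    ∀ {σ σ₁ : Abs Q dim} {ms : List (Move Q D dim)}, AbsStep P σ m σ₁ → AbsRun P σ₁ ms σ' →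
      AbsRun P σ (ms.orderedInsert (fun a b => a.2 ≤ b.2) m) σ'
  | _, _, [], h, nil _ => cons h (nil _)
  | _, _, m₂ :: ms, h, cons h₂ hrun => by
    by_cases hle : m.2 ≤ m₂.2
    · rw [List.orderedInsert_cons, if_pos hle]
      exact cons h (cons h₂ hrun)
    · rw [List.orderedInsert_cons, if_neg hle]
      obtain ⟨σ'', h₂', h'⟩ := h.swap_of_round_lt hv (not_le.mp hle) h₂
      exact cons h₂' (orderedInsert hv h' hrun)

theorem insertionSort (hv : P.v = 0) :
    ∀ {σ : Abs Q dim} {ms : List (Move Q D dim)}, AbsRun P σ ms σ' →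
      AbsRun P σ (ms.insertionSort (fun a b => a.2 ≤ b.2)) σ'
  | _, [], hrun => hrun
  | _, _ :: _, cons h hrun => orderedInsert hv h (insertionSort hv hrun)

end AbsRun

/-- Reordering executions round by round when `v = 0`. -/
theorem reorder_execution_v0 {Q D : Type} {dim : ℕ}
    (P : Protocol Q D dim) (hv : P.v = 0)
    (ms : List (Move Q D dim)) (σ : Abs Q dim)
    (hrun : AbsRun P (Abs.init P) ms σ) :
    ∃ ms' : List (Move Q D dim), ∃ σ' : Abs Q dim,
      AbsRun P (Abs.init P) ms' σ' ∧
      ms'.Perm ms ∧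
      List.Pairwise (· ≤ ·) (ms'.map Prod.snd) ∧
      σ.S ⊆ σ'.S ∧ σ.W = σ'.W := by
  let byRound : Move Q D dim → Move Q D dim → Prop := fun a b => a.2 ≤ b.2
  have : Std.Total byRound := ⟨fun a b => le_total a.2 b.2⟩
  have : IsTrans _ byRound := ⟨fun _ _ _ => le_trans⟩
  refine ⟨ms.insertionSort byRound, σ, hrun.insertionSort hv, List.perm_insertionSort _ _, ?_,
    subset_rfl, rfl⟩
  exact List.pairwise_map.mpr (List.pairwise_insertionSort byRound ms)
end
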